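/- Let Γ be a linear order on a finite set Σ and let Π be a weak order on Σ with buckets Σ_1, …, Σ_k. Partition each bucket Σ_h into maximal blocks of markers that appear as a contiguous substring of Γ. Then there exists a linear extension Π' of Π maximizing the number of adjacencies with Γ in which, for every block, the markers of the block appear consecutively in Π' in the same order as the corresponding substring of Γ. -/

import Mathlib

/-- The list of ordered pairs of consecutive elements of a list. -/
def consecPairs {α : Type*} (l : List α) : List (α × α) := l.zip l.tail

/-- The adjacencies of two permutations `l1` and `l2`, as a list of ordered pairs:
the pairs of consecutive elements of `l1` that are also pairs of consecutive elements of `l2`. -/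
def adjPairs {α : Type*} [DecidableEq α] (l1 l2 : List α) : List (α × α) :=
  (consecPairs l1).filter (fun ab => ab ∈ consecPairs l2)

/-- The number of adjacencies of two permutations. -/
def numAdj {α : Type*} [DecidableEq α] (l1 l2 : List α) : ℕ := (adjPairs l1 l2).length

/-- `L` is (the permutation representing) a linear extension of the partial order `rel`:
`L` lists each element exactly once, and whenever `rel a b` holds, `a` appears before `b`. -/
def IsLinearization {α : Type*} (rel : α → α → Prop) (L : List α) : Prop :=
  L.Nodup ∧ (∀ x, x ∈ L) ∧ ∀ a b, rel a b → List.Sublist [a, b] L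

/-- `w` is a block of the bucket `h` (of the weak order with bucket function `ρ`) with respect
to the permutation `Γ`: `w` is a nonempty maximal contiguous substring of `Γ` all of whose
markers lie in bucket `h`. (Such blocks partition each bucket into maximal sets of markers
appearing as contiguous substrings of `Γ`.) -/
def IsBlock {α : Type*} {k : ℕ} (Γ : List α) (ρ : α → Fin k) (h : Fin k) (w : List α) : Prop :=
  w ≠ [] ∧ w <:+: Γ ∧ (∀ x ∈ w, ρ x = h) ∧
  (∀ a : α, (a :: w) <:+: Γ → ρ a ≠ h) ∧
  (∀ a : α, (w ++ [a]) <:+: Γ → ρ a ≠ h)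

/-!
The blocks are exactly the maximal runs of `Γ` whose markers share a bucket. Given a linear
extension `L`, rearrange `Γ` by listing its runs in the order in which `L` meets their first
markers. This is again a linear extension, it contains every block, and it has at least as many
adjacencies with `Γ` as `L`: it keeps every adjacency inside a bucket, and an adjacency `(a, b)`
of `Γ` and `L` that it loses joins two buckets, so the run ending in `a` cannot be contiguous in
`L`, i.e. `L` misses an adjacency inside that run, which the rearrangement has. A linear extension
has at most one adjacency leaving each bucket, so this charges lost adjacencies injectively to
gained ones. Rearranging an optimal linear extension proves the theorem.
-/

namespace List

variable {α : Type*} {a b x y : α}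

theorem Nodup.not_sublist_swap {L : List α} (hL : L.Nodup) (h : [a, b] <+ L) :
    ¬ [b, a] <+ L := by
  induction L with
  | nil => simp at h
  | cons z L ih =>
    have hz : z ∉ L := (nodup_cons.1 hL).1
    simp only [sublist_cons_iff, cons.injEq] at h ⊢
    grind

theorem Nodup.append_cons_inj {l₁ l₂ l₃ l₄ : List α} (h : (l₁ ++ a :: l₂).Nodup)
    (he : l₁ ++ a :: l₂ = l₃ ++ a :: l₄) : l₁ = l₃ ∧ l₂ = l₄ := by
  have ha := (nodup_cons.1 (nodup_middle.1 h)).1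
  rw [mem_append, not_or] at ha
  have := (append_cons_inj_of_notMem ha.1 ha.2).1 he
  exact ⟨this.1, this.2.2⟩

theorem infix_of_forall_infix_pair {c L : List α} (hL : L.Nodup) (hc : c ≠ []) (hsub : c ⊆ L)
    (h : ∀ x y, [x, y] <:+: c → [x, y] <:+: L) : c <:+: L := by
  induction c with
  | nil => exact absurd rfl hc
  | cons x c ih =>
    rcases c with _ | ⟨y, c⟩
    · exact (singleton_infix_iff x L).2 (hsub mem_cons_self)
    · obtain ⟨s, t, rfl⟩ := ih (cons_ne_nil y c) (fun z hz => hsub (mem_cons_of_mem x hz))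
        (fun u v huv => h u v (infix_cons huv))
      obtain ⟨u, v, huv⟩ := h x y (prefix_append [x, y] c).isInfix
      obtain ⟨rfl, -⟩ := Nodup.append_cons_inj (l₁ := s) (l₂ := c ++ t) (l₃ := u ++ [x])
        (l₄ := v) (by simpa using hL) (by simpa using huv.symm)
      exact ⟨u, t, by simp⟩

theorem eq_of_infix_pair_of_pairwise {β : Type*} [PartialOrder β] {f : α → β} {L : List α}
    {a' b' : α} (hL : L.Pairwise fun x y => f x ≤ f y) (h : [a, b] <:+: L)
    (h' : [a', b'] <:+: L) (hab : f a ≠ f b) (hab' : f a' ≠ f b') (hf : f a = f a') :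
    a = a' ∧ b = b' := by
  have key : ∀ {a b a' : α} {v : List α}, (a :: b :: v).Pairwise (fun x y => f x ≤ f y) →
      f a ≠ f b → a' ∈ b :: v → f a ≠ f a' := by
    intro a b a' v hp hab ha' hf
    have h₂ : f b ≤ f a' := by
      rcases mem_cons.1 ha' with rfl | ha'
      · exact le_rfl
      · exact rel_of_pairwise_cons hp.of_cons ha'
    exact hab (le_antisymm (rel_of_pairwise_cons hp mem_cons_self) (hf ▸ h₂))
  obtain ⟨u, v, rfl⟩ := h
  obtain ⟨u', v', he⟩ := h'
  simp only [append_assoc, cons_append, nil_append] at he hL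
  have hp := hL.sublist (sublist_append_right u _)
  have hp' := (he ▸ hL).sublist (sublist_append_right u' _)
  rcases append_eq_append_iff.1 he with ⟨w, -, hw⟩ | ⟨w, -, hw⟩ <;> rcases w with _ | ⟨z, w⟩
  · simp_all
  · obtain ⟨rfl, htail⟩ := cons_eq_cons.1 hw
    exact absurd hf.symm (key hp' hab' (by simp [htail]))
  · simp_all
  · obtain ⟨rfl, htail⟩ := cons_eq_cons.1 hw
    exact absurd hf (key hp hab (by simp [htail]))

variable {r : α → α → Bool} {l c d : List α}

theorem infix_pair_flatten {L : List (List α)} (hL : [] ∉ L) (h : [x, y] <:+: L.flatten) :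
    (∃ c ∈ L, [x, y] <:+: c) ∨
      ∃ c d, [c, d] <:+: L ∧ c.getLast? = some x ∧ d.head? = some y := by
  induction L with
  | nil => simp at h
  | cons c L ih =>
    rw [flatten_cons, infix_append_iff_ne_nil] at h
    rcases h with h | h | ⟨l₁, l₂, h₁, h₂, he, hs, hp⟩
    · exact .inl ⟨c, mem_cons_self, h⟩
    · rcases ih (fun h' => hL (mem_cons_of_mem _ h')) h with ⟨e, he, hxy⟩ | ⟨e, f, hef, hx, hy⟩
      · exact .inl ⟨e, mem_cons_of_mem _ he, hxy⟩
      · exact .inr ⟨e, f, infix_cons hef, hx, hy⟩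
    · obtain ⟨rfl, rfl⟩ : l₁ = [x] ∧ l₂ = [y] := by
        rcases l₁ with _ | ⟨a, _ | ⟨b, l₁⟩⟩ <;> simp_all
      obtain ⟨t, rfl⟩ := hs
      rcases L with _ | ⟨_ | ⟨z, d⟩, L⟩
      · simp at hp
      · simp at hL
      · refine .inr ⟨t ++ [x], z :: d, (prefix_append _ L).isInfix, by simp, ?_⟩
        simp_all

theorem rel_of_infix_pair_of_mem_splitBy (hc : c ∈ l.splitBy r) (h : [x, y] <:+: c) :
    r x y = true :=
  (isChain_pair (R := fun x y => r x y = true)).1 ((isChain_of_mem_splitBy hc).infix h)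

theorem rel_eq_false_of_infix_pair_splitBy (h : [c, d] <:+: l.splitBy r)
    (hx : c.getLast? = some x) (hy : d.head? = some y) : r x y = false := by
  obtain ⟨u, v, huv⟩ := h
  obtain ⟨hc, hd, hcd⟩ := isChain_iff_forall_rel_of_append_cons_cons.1
    (isChain_getLast_head_splitBy r l) (by simp [← huv] : l.splitBy r = u ++ c :: d :: v)
  rwa [Option.some_inj.1 ((getLast?_eq_some_getLast hc).symm.trans hx),
    Option.some_inj.1 ((head?_eq_some_head hd).symm.trans hy)] at hcd

theorem exists_mem_splitBy_infix_pair (h : [x, y] <:+: l) (hxy : r x y = true) :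
    ∃ c ∈ l.splitBy r, [x, y] <:+: c := by
  rw [← flatten_splitBy r l] at h
  rcases infix_pair_flatten (nil_notMem_splitBy r l) h with hc | ⟨c, d, hcd, hx, hy⟩
  · exact hc
  · simp [rel_eq_false_of_infix_pair_splitBy hcd hx hy] at hxy

theorem exists_splitBy_getLast_head (h : [x, y] <:+: l) (hxy : r x y = false) :
    ∃ c ∈ l.splitBy r, ∃ d ∈ l.splitBy r, c.getLast? = some x ∧ d.head? = some y := by
  rw [← flatten_splitBy r l] at h
  rcases infix_pair_flatten (nil_notMem_splitBy r l) h with ⟨c, hc, hxyc⟩ | ⟨c, d, hcd, hx, hy⟩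
  · simp [rel_of_infix_pair_of_mem_splitBy hc hxyc] at hxy
  · exact ⟨c, hcd.subset (by simp), d, hcd.subset (by simp), hx, hy⟩

end List

namespace Finset

theorem card_filter_le_card_filter_of_injOn {ι κ : Type*} [DecidableEq κ] {s : Finset ι}
    {p q : ι → Prop} [DecidablePred p] [DecidablePred q] (g : ι → κ)
    (hg : Set.InjOn g ({i ∈ s | p i ∧ ¬ q i} : Finset ι))
    (hpq : ∀ i ∈ s, p i → ¬ q i → ∃ j ∈ s, q j ∧ ¬ p j ∧ g j = g i) :
    #{i ∈ s | p i} ≤ #{i ∈ s | q i} := by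
  have hsdiff : #{i ∈ s | p i ∧ ¬ q i} ≤ #{i ∈ s | q i ∧ ¬ p i} := calc
    #{i ∈ s | p i ∧ ¬ q i} = #({i ∈ s | p i ∧ ¬ q i}.image g) := (card_image_of_injOn hg).symm
    _ ≤ #({i ∈ s | q i ∧ ¬ p i}.image g) := card_le_card fun k hk => by
      obtain ⟨i, hi, rfl⟩ := mem_image.1 hk
      simp only [mem_filter] at hi
      obtain ⟨j, hj, hqj, hpj, hji⟩ := hpq i hi.1 hi.2.1 hi.2.2
      exact mem_image.2 ⟨j, mem_filter.2 ⟨hj, hqj, hpj⟩, hji⟩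
    _ ≤ #{i ∈ s | q i ∧ ¬ p i} := card_image_le
  have hp := card_filter_add_card_filter_not (s := {i ∈ s | p i}) q
  have hq := card_filter_add_card_filter_not (s := {i ∈ s | q i}) p
  simp only [filter_filter] at hp hq
  simp only [and_comm (a := q _) (b := p _)] at hq
  omega

end Finset

open List Finset

section ConsecPairs

variable {α : Type*} {x y : α} {l : List α}

theorem mem_consecPairs : (x, y) ∈ consecPairs l ↔ [x, y] <:+: l := by
  induction l with
  | nil => simp [consecPairs]
  | cons a l ih =>
    cases l with
    | nil => simpa [consecPairs] using fun h : [x, y] <:+: [a] => h.length_le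
    | cons b l =>
      rw [infix_cons_iff, ← ih]
      simp [consecPairs]

theorem nodup_consecPairs (h : l.Nodup) : (consecPairs l).Nodup :=
  Nodup.of_map Prod.snd (by
    rw [consecPairs, map_snd_zip (by simp)]
    exact h.sublist (tail_sublist l))

theorem numAdj_eq_card [DecidableEq α] {Γ : List α} (hΓ : Γ.Nodup) (L : List α) :
    numAdj Γ L = #{p ∈ (consecPairs Γ).toFinset | [p.1, p.2] <:+: L} := by
  rw [numAdj, adjPairs, ← toFinset_card_of_nodup ((nodup_consecPairs hΓ).filter _),
    toFinset_filter]
  simp only [decide_eq_true_eq]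
  exact congrArg _ (filter_congr fun p _ => mem_consecPairs)

end ConsecPairs

section Runs

variable {α β : Type*} [DecidableEq β] (ρ : α → β) (Γ : List α)

def bucketRuns : List (List α) := Γ.splitBy fun x y => decide (ρ x = ρ y)

def runFrom [DecidableEq α] (x : α) : List α :=
  ((bucketRuns ρ Γ).find? fun c => decide (c.head? = some x)).getD []

def arrangeRuns [DecidableEq α] (L : List α) : List α := L.flatMap (runFrom ρ Γ)

variable {ρ Γ} {x y : α} {c d : List α}

theorem flatten_bucketRuns : (bucketRuns ρ Γ).flatten = Γ := flatten_splitBy _ _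

theorem infix_of_mem_bucketRuns (hc : c ∈ bucketRuns ρ Γ) : c <:+: Γ := by
  simpa only [flatten_bucketRuns] using infix_of_mem_flatten hc

theorem bucket_eq_of_mem_bucketRuns (hc : c ∈ bucketRuns ρ Γ) (hx : x ∈ c) (hy : y ∈ c) :
    ρ x = ρ y := by
  have key := (isChain_of_mem_splitBy hc).induction (fun z => ρ z = ρ (c.head (ne_nil_of_mem hx)))
    c (fun x y hxy hx => by simp_all) (fun _ => rfl)
  rw [key x hx, key y hy]

theorem mem_bucketRuns_of_isBlock {k : ℕ} {ρ : α → Fin k} {h : Fin k} {w : List α}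
    (hw : IsBlock Γ ρ h w) : w ∈ bucketRuns ρ Γ := by
  obtain ⟨hne, ⟨s, t, rfl⟩, hwh, hleft, hright⟩ := hw
  have hchain : w.IsChain fun x y => decide (ρ x = ρ y) :=
    (pairwise_of_forall_mem_list fun x hx y hy => by simp [hwh x hx, hwh y hy]).isChain
  rw [bucketRuns, append_assoc, splitBy_append, splitBy_append, splitBy_of_isChain hne hchain]
  · simp
  · intro x hx z hz
    obtain ⟨t', rfl⟩ := head?_eq_some_iff.1 (Option.mem_def.1 hz)
    have := hright z ⟨s, t', by simp⟩
    simp [hwh x (mem_of_getLast? hx), Ne.symm this]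
  · intro z hz x hx
    obtain ⟨s', rfl⟩ := getLast?_eq_some_iff.1 (Option.mem_def.1 hz)
    have := hleft z ⟨s', t, by simp⟩
    rw [head?_append_of_ne_nil _ hne] at hx
    simp [hwh x (mem_of_mem_head? hx), this]

theorem exists_mem_bucketRuns_infix_pair (h : [x, y] <:+: Γ) (hxy : ρ x = ρ y) :
    ∃ c ∈ bucketRuns ρ Γ, [x, y] <:+: c :=
  exists_mem_splitBy_infix_pair h (by simpa using hxy)

theorem exists_bucketRuns_getLast_head (h : [x, y] <:+: Γ) (hxy : ρ x ≠ ρ y) :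
    ∃ c ∈ bucketRuns ρ Γ, ∃ d ∈ bucketRuns ρ Γ, c.getLast? = some x ∧ d.head? = some y :=
  exists_splitBy_getLast_head h (by simpa using hxy)

theorem eq_of_mem_bucketRuns (hΓ : Γ.Nodup) (hc : c ∈ bucketRuns ρ Γ) (hd : d ∈ bucketRuns ρ Γ)
    (hxc : x ∈ c) (hxd : x ∈ d) : c = d := by
  have : Std.Symm (@List.Disjoint α) := ⟨fun _ _ h => h.symm⟩
  rw [← flatten_bucketRuns (ρ := ρ) (Γ := Γ)] at hΓ
  by_contra hcd
  exact (nodup_flatten.1 hΓ).2.forall hc hd hcd hxc hxd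

variable [DecidableEq α] {L : List α} {a b : α}

theorem runFrom_of_mem (hΓ : Γ.Nodup) (hc : c ∈ bucketRuns ρ Γ) (hx : x ∈ c) :
    runFrom ρ Γ x = if c.head? = some x then c else [] := by
  unfold runFrom
  cases hf : (bucketRuns ρ Γ).find? fun d => decide (d.head? = some x) with
  | none =>
    rw [find?_eq_none] at hf
    rw [Option.getD_none, if_neg (by simpa using hf c hc)]
  | some d =>
    have hdx : d.head? = some x := by simpa using find?_some hf
    obtain rfl := eq_of_mem_bucketRuns hΓ (mem_of_find?_eq_some hf) hc (mem_of_mem_head? hdx) hx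
    simp [hdx]

theorem bucket_eq_of_mem_runFrom (hy : y ∈ runFrom ρ Γ x) : ρ y = ρ x := by
  unfold runFrom at hy
  cases hf : (bucketRuns ρ Γ).find? fun d => decide (d.head? = some x) with
  | none => simp [hf] at hy
  | some c =>
    rw [hf, Option.getD_some] at hy
    exact bucket_eq_of_mem_bucketRuns (mem_of_find?_eq_some hf) hy
      (mem_of_mem_head? (by simpa using find?_some hf))

theorem flatMap_runFrom_of_mem (hΓ : Γ.Nodup) (hc : c ∈ bucketRuns ρ Γ) :
    c.flatMap (runFrom ρ Γ) = c := by
  have hcn : c.Nodup := (nodup_flatten.1 (by rwa [flatten_bucketRuns])).1 c hc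
  obtain ⟨x, c', rfl⟩ := exists_cons_of_ne_nil (ne_nil_of_mem_splitBy hc)
  rw [flatMap_cons, runFrom_of_mem hΓ hc mem_cons_self, if_pos head?_cons,
    flatMap_congr (g := fun _ => []) fun y hy => ?_]
  · simp
  · rw [runFrom_of_mem hΓ hc (mem_cons_of_mem x hy), if_neg]
    rintro ⟨⟩
    exact (nodup_cons.1 hcn).1 hy

theorem arrangeRuns_perm (hΓ : Γ.Nodup) (hL : L ~ Γ) : arrangeRuns ρ Γ L ~ Γ := by
  have hΓ' : Γ.flatMap (runFrom ρ Γ) = Γ := calc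
    Γ.flatMap (runFrom ρ Γ) = (bucketRuns ρ Γ).flatten.flatMap (runFrom ρ Γ) := by
      rw [flatten_bucketRuns]
    _ = (bucketRuns ρ Γ).flatMap fun c => c.flatMap (runFrom ρ Γ) := by
      rw [flatten_eq_flatMap, flatMap_assoc]; rfl
    _ = Γ := by
      rw [flatMap_congr fun c hc => flatMap_runFrom_of_mem hΓ hc, flatMap_id', flatten_bucketRuns]
  simpa [arrangeRuns, hΓ'] using hL.flatMap_right (runFrom ρ Γ)

theorem infix_arrangeRuns (hΓ : Γ.Nodup) (hL : L ~ Γ) (hc : c ∈ bucketRuns ρ Γ) :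
    c <:+: arrangeRuns ρ Γ L := by
  obtain ⟨x, c', rfl⟩ := exists_cons_of_ne_nil (ne_nil_of_mem_splitBy hc)
  obtain ⟨u, v, rfl⟩ :=
    append_of_mem (hL.mem_iff.2 ((infix_of_mem_bucketRuns hc).subset mem_cons_self))
  rw [arrangeRuns, flatMap_append, flatMap_cons, runFrom_of_mem hΓ hc mem_cons_self,
    if_pos head?_cons]
  exact infix_append' _ _ _

theorem infix_pair_arrangeRuns_of_bucket_eq (hΓ : Γ.Nodup) (hL : L ~ Γ) (h : [x, y] <:+: Γ)
    (hxy : ρ x = ρ y) : [x, y] <:+: arrangeRuns ρ Γ L := by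
  obtain ⟨c, hc, hxyc⟩ := exists_mem_bucketRuns_infix_pair h hxy
  exact hxyc.trans (infix_arrangeRuns hΓ hL hc)

theorem infix_pair_arrangeRuns_of_infix (hΓ : Γ.Nodup) (hL : L ~ Γ)
    (hc : c ∈ bucketRuns ρ Γ) (ha : c.getLast? = some a) (hd : d ∈ bucketRuns ρ Γ)
    (hb : d.head? = some b) (hcL : c <:+: L) (habL : [a, b] <:+: L) :
    [a, b] <:+: arrangeRuns ρ Γ L := by
  obtain ⟨c', rfl⟩ := getLast?_eq_some_iff.1 ha
  obtain ⟨d', rfl⟩ := head?_eq_some_iff.1 hb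
  obtain ⟨s, t, rfl⟩ := hcL
  obtain ⟨u, v, huv⟩ := habL
  obtain ⟨-, rfl⟩ := Nodup.append_cons_inj (l₁ := s ++ c') (l₂ := t) (l₃ := u) (l₄ := b :: v)
    (by simpa using hL.nodup_iff.2 hΓ) (by simpa using huv.symm)
  have hT : arrangeRuns ρ Γ (s ++ (c' ++ [a]) ++ b :: v) =
      s.flatMap (runFrom ρ Γ) ++ c' ++ a :: b :: d' ++ v.flatMap (runFrom ρ Γ) := by
    rw [arrangeRuns, flatMap_append, flatMap_append, flatMap_runFrom_of_mem hΓ hc, flatMap_cons,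
      runFrom_of_mem hΓ hd mem_cons_self, if_pos head?_cons]
    simp
  rw [hT]
  exact ⟨s.flatMap (runFrom ρ Γ) ++ c', d' ++ v.flatMap (runFrom ρ Γ), by simp⟩

theorem exists_infix_pair_of_not_infix_arrangeRuns (hΓ : Γ.Nodup) (hL : L ~ Γ)
    (hab : [a, b] <:+: Γ) (habL : [a, b] <:+: L) (habT : ¬ [a, b] <:+: arrangeRuns ρ Γ L) :
    ∃ x y, [x, y] <:+: Γ ∧ [x, y] <:+: arrangeRuns ρ Γ L ∧ ¬ [x, y] <:+: L ∧ ρ x = ρ a := by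
  have hρ : ρ a ≠ ρ b := fun h => habT (infix_pair_arrangeRuns_of_bucket_eq hΓ hL hab h)
  obtain ⟨c, hc, d, hd, ha, hb⟩ := exists_bucketRuns_getLast_head hab hρ
  have hcΓ := infix_of_mem_bucketRuns hc
  obtain ⟨x, y, hxy, hxyL⟩ : ∃ x y, [x, y] <:+: c ∧ ¬ [x, y] <:+: L := by
    by_contra! h
    exact habT (infix_pair_arrangeRuns_of_infix hΓ hL hc ha hd hb
      (infix_of_forall_infix_pair (hL.nodup_iff.2 hΓ) (ne_nil_of_mem_splitBy hc)
        (fun z hz => hL.mem_iff.2 (hcΓ.subset hz)) h) habL)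
  exact ⟨x, y, hxy.trans hcΓ, hxy.trans (infix_arrangeRuns hΓ hL hc), hxyL,
    bucket_eq_of_mem_bucketRuns hc (hxy.subset mem_cons_self) (mem_of_getLast? ha)⟩

end Runs

section Linearization

variable {α β : Type*} [LinearOrder β] {ρ : α → β} {Γ L : List α}

theorem IsLinearization.perm {r : α → α → Prop} (hL : IsLinearization r L) (hΓ : Γ.Nodup)
    (hΓc : ∀ x, x ∈ Γ) : L ~ Γ :=
  (perm_ext_iff_of_nodup hL.1 hΓ).2 fun x => iff_of_true (hL.2.1 x) (hΓc x)

theorem IsLinearization.pairwise_le (hL : IsLinearization (fun a b => ρ a < ρ b) L) :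
    L.Pairwise fun a b => ρ a ≤ ρ b :=
  pairwise_iff_forall_sublist.2 fun hab =>
    not_lt.1 fun hba => hL.1.not_sublist_swap hab (hL.2.2 _ _ hba)

theorem isLinearization_of_pairwise_le (hn : L.Nodup) (hc : ∀ x, x ∈ L)
    (hp : L.Pairwise fun a b => ρ a ≤ ρ b) : IsLinearization (fun a b => ρ a < ρ b) L := by
  refine ⟨hn, hc, fun a b hab => ?_⟩
  have : Std.Symm fun x y => [x, y] <+ L ∨ [y, x] <+ L := ⟨fun _ _ => Or.symm⟩
  have hsub := (pairwise_iff_forall_sublist.2 fun h => .inl h : L.Pairwise _).forall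
    (R := fun x y => [x, y] <+ L ∨ [y, x] <+ L) (hc a) (hc b) (ne_of_apply_ne ρ hab.ne)
  exact hsub.resolve_right fun hba => not_le_of_gt hab (pairwise_iff_forall_sublist.1 hp hba)

theorem exists_isLinearization (hΓ : Γ.Nodup) (hΓc : ∀ x, x ∈ Γ) :
    ∃ L, IsLinearization (fun a b => ρ a < ρ b) L := by
  have hperm := mergeSort_perm Γ fun a b => decide (ρ a ≤ ρ b)
  refine ⟨_, isLinearization_of_pairwise_le (hperm.nodup_iff.2 hΓ)
    (fun x => hperm.mem_iff.2 (hΓc x)) ?_⟩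
  simpa using pairwise_mergeSort (le := fun a b => decide (ρ a ≤ ρ b))
    (fun _ _ _ => by simpa using le_trans) (fun a b => by simpa using le_total _ _) Γ

variable [DecidableEq α]

theorem isLinearization_arrangeRuns (hΓ : Γ.Nodup) (hΓc : ∀ x, x ∈ Γ)
    (hL : IsLinearization (fun a b => ρ a < ρ b) L) :
    IsLinearization (fun a b => ρ a < ρ b) (arrangeRuns ρ Γ L) := by
  have hperm := arrangeRuns_perm (ρ := ρ) hΓ (hL.perm hΓ hΓc)
  refine isLinearization_of_pairwise_le (hperm.nodup_iff.2 hΓ) (fun x => hperm.mem_iff.2 (hΓc x)) ?_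
  rw [arrangeRuns, pairwise_flatMap]
  refine ⟨fun x _ => pairwise_of_forall_mem_list fun y hy z hz => ?_,
    hL.pairwise_le.imp fun hxy y hy z hz => ?_⟩
  · rw [bucket_eq_of_mem_runFrom hy, bucket_eq_of_mem_runFrom hz]
  · rwa [bucket_eq_of_mem_runFrom hy, bucket_eq_of_mem_runFrom hz]

theorem numAdj_le_numAdj_arrangeRuns (hΓ : Γ.Nodup) (hΓc : ∀ x, x ∈ Γ)
    (hL : IsLinearization (fun a b => ρ a < ρ b) L) :
    numAdj Γ L ≤ numAdj Γ (arrangeRuns ρ Γ L) := by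
  have hperm := hL.perm hΓ hΓc
  have cross : ∀ {a b}, [a, b] <:+: Γ → ¬ [a, b] <:+: arrangeRuns ρ Γ L → ρ a ≠ ρ b :=
    fun hab habT h => habT (infix_pair_arrangeRuns_of_bucket_eq hΓ hperm hab h)
  rw [numAdj_eq_card hΓ, numAdj_eq_card hΓ]
  refine card_filter_le_card_filter_of_injOn (fun p => ρ p.1) ?_ ?_
  · rintro ⟨a, b⟩ hp ⟨a', b'⟩ hp' (hf : ρ a = ρ a')
    simp only [coe_filter, List.mem_toFinset, mem_consecPairs, Set.mem_ofPred_eq] at hp hp'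
    obtain ⟨rfl, rfl⟩ := eq_of_infix_pair_of_pairwise hL.pairwise_le hp.2.1 hp'.2.1
      (cross hp.1 hp.2.2) (cross hp'.1 hp'.2.2) hf
    rfl
  · rintro ⟨a, b⟩ hp habL habT
    rw [List.mem_toFinset, mem_consecPairs] at hp
    obtain ⟨x, y, hxy, hxyT, hxyL, hρ⟩ :=
      exists_infix_pair_of_not_infix_arrangeRuns hΓ hperm hp habL habT
    exact ⟨(x, y), by simpa [mem_consecPairs] using hxy, hxyT, hxyL, hρ⟩

end Linearization

theorem exists_max_adjacency_linearization_respecting_blocks_general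
    {α : Type*} [DecidableEq α] (k : ℕ)
    (Γ : List α) (hΓn : Γ.Nodup) (hΓc : ∀ x, x ∈ Γ)
    (ρ : α → Fin k) :
    ∃ L : List α,
      IsLinearization (fun a b => ρ a < ρ b) L ∧
      (∀ L' : List α, IsLinearization (fun a b => ρ a < ρ b) L' →
        numAdj Γ L' ≤ numAdj Γ L) ∧
      (∀ h : Fin k, ∀ w : List α, IsBlock Γ ρ h w → w <:+: L) := by
  classical
  obtain ⟨L, hL, hmax⟩ := exists_max_image
    {L ∈ Γ.permutations.toFinset | IsLinearization (fun a b => ρ a < ρ b) L} (numAdj Γ) (by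
      obtain ⟨L, hL⟩ := exists_isLinearization (ρ := ρ) hΓn hΓc
      exact ⟨L, by simpa using ⟨hL.perm hΓn hΓc, hL⟩⟩)
  simp only [Finset.mem_filter, List.mem_toFinset, mem_permutations, and_imp] at hL hmax
  refine ⟨arrangeRuns ρ Γ L, isLinearization_arrangeRuns hΓn hΓc hL.2, fun L' hL' => ?_,
    fun _ _ hw => infix_arrangeRuns hΓn hL.1 (mem_bucketRuns_of_isBlock hw)⟩
  exact (hmax L' (hL'.perm hΓn hΓc) hL').trans (numAdj_le_numAdj_arrangeRuns hΓn hΓc hL.2)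

/-- Let `Γ` be a linear order on a finite set and let `ρ` describe a weak order with buckets
`Σ_1, …, Σ_k` (where `a ≺ b` iff `ρ a < ρ b`). Then there exists a linear extension `L` of the
weak order maximizing the number of adjacencies with `Γ` in which every block of every bucket
appears consecutively, in the same order as the corresponding substring of `Γ`. -/
theorem exists_max_adjacency_linearization_respecting_blocks
    {α : Type*} [DecidableEq α] [Fintype α] (k : ℕ)
    (Γ : List α) (hΓn : Γ.Nodup) (hΓc : ∀ x, x ∈ Γ)
    (ρ : α → Fin k) :
    ∃ L : List α,
      IsLinearization (fun a b => ρ a < ρ b) L ∧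
      (∀ L' : List α, IsLinearization (fun a b => ρ a < ρ b) L' →
        numAdj Γ L' ≤ numAdj Γ L) ∧
      (∀ h : Fin k, ∀ w : List α, IsBlock Γ ρ h w → w <:+: L) :=
  exists_max_adjacency_linearization_respecting_blocks_general k Γ hΓn hΓc ρ
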